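/- arXiv:1808.05278 — 5 statements merged into one kernel-verified Lean document; each statement's English description precedes it below -/
import Mathlib

section
/- For all positive integers m, n, t, the sum ∑_{i=0}^{t} F_{m+i} F_{n-i} equals [(t+1) L_{m+n} − ∑_{i=0}^{t} (−1)^{n−i} L_{m−n+2i}] / 5, where F denotes the Fibonacci numbers and L the Lucas numbers. -/
/-- Fibonacci numbers extended to integer indices: `F_{-k} = (-1)^(k+1) F_k`. -/
noncomputable def fibZ (n : ℤ) : ℤ :=
  if 0 ≤ n then Nat.fib n.toNat else (-1) ^ (n.natAbs + 1) * Nat.fib n.natAbs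

/-- Lucas numbers extended to integer indices via `L_n = F_{n-1} + F_{n+1}`. -/
noncomputable def lucasZ (n : ℤ) : ℤ := fibZ (n - 1) + fibZ (n + 1)

/-!
Binet's formulas `F_k = (φ^k - ψ^k)/√5` and `L_k = φ^k + ψ^k` hold for all integer indices,
and since `φψ = -1` they give the product formula `5 F_a F_b = L_{a+b} - (-1)^b L_{a-b}`.
Applying it to each term `F_{m+i} F_{n-i}`, where `a + b = m + n` does not depend on `i`
and `a - b = m - n + 2i`, and summing over `i` gives the identity.
-/

open goldenRatio

lemma fibZ_eq_binet (k : ℤ) : (fibZ k : ℝ) = (φ ^ k - ψ ^ k) / √5 := by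
  rw [fibZ]
  split_ifs with h
  · lift k to ℕ using h
    push_cast
    simp only [Int.toNat_natCast, zpow_natCast, Real.coe_fib_eq]
  · obtain ⟨j, rfl⟩ : ∃ j : ℕ, k = -(j : ℤ) := ⟨k.natAbs, by omega⟩
    rw [show (-(j : ℤ)).natAbs = j by omega]
    push_cast
    rw [Real.coe_fib_eq, zpow_neg, zpow_neg, zpow_natCast, zpow_natCast, ← inv_pow, ← inv_pow,
      Real.inv_goldenRatio, Real.inv_goldenConj, neg_pow ψ, neg_pow φ, pow_succ]
    ring

lemma lucasZ_eq_binet (k : ℤ) : (lucasZ k : ℝ) = φ ^ k + ψ ^ k := by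
  have hφ : φ⁻¹ = -ψ := Real.inv_goldenRatio
  have hψ : ψ⁻¹ = -φ := Real.inv_goldenConj
  rw [lucasZ, Int.cast_add, fibZ_eq_binet, fibZ_eq_binet,
    zpow_sub_one₀ Real.goldenRatio_ne_zero, zpow_sub_one₀ Real.goldenConj_ne_zero,
    zpow_add_one₀ Real.goldenRatio_ne_zero, zpow_add_one₀ Real.goldenConj_ne_zero, hφ, hψ,
    ← add_div, div_eq_iff (by positivity), ← Real.goldenRatio_sub_goldenConj]
  ring

lemma neg_one_zpow_eq_goldenRatio_mul_goldenConj_zpow (k : ℤ) :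
    (-1 : ℝ) ^ k = φ ^ k * ψ ^ k := by
  rw [← mul_zpow, Real.goldenRatio_mul_goldenConj]

lemma five_mul_fibZ_mul_fibZ (a b : ℤ) :
    5 * (fibZ a : ℝ) * fibZ b = lucasZ (a + b) - (-1 : ℝ) ^ b * lucasZ (a - b) := by
  have hφ : φ ^ a = φ ^ (a - b) * φ ^ b := by
    rw [← zpow_add₀ Real.goldenRatio_ne_zero, sub_add_cancel]
  have hψ : ψ ^ a = ψ ^ (a - b) * ψ ^ b := by
    rw [← zpow_add₀ Real.goldenConj_ne_zero, sub_add_cancel]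
  have h5 : √5 * √5 = 5 := Real.mul_self_sqrt (by norm_num)
  rw [fibZ_eq_binet, fibZ_eq_binet, lucasZ_eq_binet, lucasZ_eq_binet,
    neg_one_zpow_eq_goldenRatio_mul_goldenConj_zpow, zpow_add₀ Real.goldenRatio_ne_zero,
    zpow_add₀ Real.goldenConj_ne_zero, mul_assoc, div_mul_div_comm, h5, hφ, hψ]
  ring

lemma fibZ_mul_fibZ (a b : ℤ) :
    (fibZ a : ℚ) * fibZ b = (lucasZ (a + b) - (-1 : ℚ) ^ b * lucasZ (a - b)) / 5 := by
  apply Rat.cast_injective (α := ℝ)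
  push_cast
  linear_combination five_mul_fibZ_mul_fibZ a b / 5

theorem stmt0_general (m n t : ℕ) :
    (∑ i ∈ Finset.range (t + 1),
        ((fibZ ((m : ℤ) + i) : ℚ) * (fibZ ((n : ℤ) - i) : ℚ))) =
      (((t : ℚ) + 1) * (lucasZ ((m : ℤ) + n) : ℚ) -
        ∑ i ∈ Finset.range (t + 1),
          (-1 : ℚ) ^ ((n : ℤ) - i) * (lucasZ ((m : ℤ) - n + 2 * i) : ℚ)) / 5 := by
  have hterm (i : ℕ) : (fibZ ((m : ℤ) + i) : ℚ) * fibZ ((n : ℤ) - i) =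
      (lucasZ ((m : ℤ) + n) -
        (-1 : ℚ) ^ ((n : ℤ) - i) * lucasZ ((m : ℤ) - n + 2 * i)) / 5 := by
    rw [fibZ_mul_fibZ]
    ring_nf
  simp only [hterm, ← Finset.sum_div, Finset.sum_sub_distrib, Finset.sum_const,
    Finset.card_range, nsmul_eq_mul]
  push_cast
  ring

theorem stmt0 (m n t : ℕ) (hm : 0 < m) (hn : 0 < n) (ht : 0 < t) :
    (∑ i ∈ Finset.range (t + 1),
        ((fibZ ((m : ℤ) + i) : ℚ) * (fibZ ((n : ℤ) - i) : ℚ))) =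
      (((t : ℚ) + 1) * (lucasZ ((m : ℤ) + n) : ℚ) -
        ∑ i ∈ Finset.range (t + 1),
          (-1 : ℚ) ^ ((n : ℤ) - i) * (lucasZ ((m : ℤ) - n + 2 * i) : ℚ)) / 5 :=
  stmt0_general m n t
end

section
/- For all positive integers m, n, t with t ≥ 1, the alternating sum ∑_{i=0}^{t-1} (−1)^{n−i−1} L_{m−n+2i} equals (−1)^{n−t} F_{m−n+2t−1} + (−1)^{m−1} F_{n−m+1}. -/
/-!
Writing `L_k = F_{k-1} + F_{k+1}` and `s_i = (-1)^(n-i-1)`, the sign flip `s_{i+1} = -s_i` makes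
the `i`-th summand equal to `g i - g (i+1)` with `g i = s_i F_{m-n+2i-1}`, so the sum telescopes to
`g 0 - g t`. The boundary term `g 0 = (-1)^(n-1) F_{m-n-1}` is turned into
`(-1)^(m-1) F_{n-m+1}` by the reflection formula `F_{-k} = (-1)^(k+1) F_k`.
-/

lemma fibZ_natCast (k : ℕ) : fibZ k = Nat.fib k := by
  simp [fibZ]

lemma fibZ_neg_natCast (k : ℕ) : fibZ (-k) = (-1) ^ (k + 1) * Nat.fib k := by
  simp [fibZ]

section Field

variable {K : Type*} [Field K]

lemma fibZ_neg (k : ℤ) : (fibZ (-k) : K) = (-1 : K) ^ (k + 1) * fibZ k := by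
  obtain ⟨k, rfl | rfl⟩ := Int.eq_nat_or_neg k
  · rw [fibZ_neg_natCast, fibZ_natCast]
    push_cast
    rw [← Nat.cast_succ, zpow_natCast]
  · rw [neg_neg, fibZ_neg_natCast, fibZ_natCast]
    push_cast
    rw [← mul_assoc, ← zpow_natCast, ← zpow_add₀ (by norm_num)]
    push_cast
    rw [show -(k : ℤ) + 1 + (k + 1) = 2 by ring]
    norm_num

lemma sum_range_neg_one_zpow_mul_lucasZ (e a : ℤ) (t : ℕ) :
    ∑ i ∈ Finset.range t, (-1 : K) ^ (e - i - 1) * (lucasZ (a + 2 * i) : K) =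
      (-1 : K) ^ (e - t) * fibZ (a + 2 * t - 1) + (-1 : K) ^ (e - 1) * fibZ (a - 1) := by
  set g : ℕ → K := fun i ↦ (-1 : K) ^ (e - i - 1) * fibZ (a + 2 * i - 1)
  have hsign (j : ℤ) : (-1 : K) ^ (j - 1) = -(-1 : K) ^ j := by
    simp [zpow_sub_one₀ (by norm_num : (-1 : K) ≠ 0)]
  have hsummand (i : ℕ) : (-1 : K) ^ (e - i - 1) * (lucasZ (a + 2 * i) : K) = g i - g (i + 1) := by
    have hidx : a + 2 * ((i + 1 : ℕ) : ℤ) - 1 = a + 2 * i + 1 := by push_cast; ring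
    have hexp : e - ((i + 1 : ℕ) : ℤ) - 1 = (e - i - 1) - 1 := by push_cast; ring
    simp only [g, lucasZ, hidx, hexp, hsign (e - i - 1), Int.cast_add]
    ring
  rw [Finset.sum_congr rfl fun i _ ↦ hsummand i, Finset.sum_range_sub']
  simp only [g, hsign (e - t), Nat.cast_zero, mul_zero, add_zero, sub_zero]
  ring

end Field

theorem stmt1_general (m n t : ℕ) :
    (∑ i ∈ Finset.range t,
        (-1 : ℚ) ^ ((n : ℤ) - i - 1) * (lucasZ ((m : ℤ) - n + 2 * i) : ℚ)) =
      (-1 : ℚ) ^ ((n : ℤ) - t) * (fibZ ((m : ℤ) - n + 2 * t - 1) : ℚ) +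
        (-1 : ℚ) ^ ((m : ℤ) - 1) * (fibZ ((n : ℤ) - m + 1) : ℚ) := by
  rw [sum_range_neg_one_zpow_mul_lucasZ]
  congr 1
  have hreflect : (n : ℤ) - m + 1 = -((m : ℤ) - n - 1) := by ring
  have hparity : (m : ℤ) - 1 + ((m : ℤ) - n - 1 + 1) = (n : ℤ) - 1 + 2 * ((m : ℤ) - n) := by ring
  rw [hreflect, fibZ_neg, ← mul_assoc, ← zpow_add₀ (by norm_num), hparity,
    zpow_add₀ (by norm_num), zpow_mul]
  norm_num

theorem stmt1 (m n t : ℕ) (hm : 0 < m) (hn : 0 < n) (ht : 1 ≤ t) :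
    (∑ i ∈ Finset.range t,
        (-1 : ℚ) ^ ((n : ℤ) - i - 1) * (lucasZ ((m : ℤ) - n + 2 * i) : ℚ)) =
      (-1 : ℚ) ^ ((n : ℤ) - t) * (fibZ ((m : ℤ) - n + 2 * t - 1) : ℚ) +
        (-1 : ℚ) ^ ((m : ℤ) - 1) * (fibZ ((n : ℤ) - m + 1) : ℚ) :=
  stmt1_general m n t
end

section
/- For every positive integer n, ∑_{i=1}^{n} F_{n-i+1} F_i = (n L_{n+1} + 2 F_n) / 5, i.e., 5 · ∑_{i=1}^{n} F_i F_{n+1-i} = n L_{n+1} + 2 F_n. -/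
/-!
Both `5 ∑ F_i F_{n+1-i}` and `n L_{n+1} + 2 F_n` satisfy the recurrence
`a (n + 2) = a n + a (n + 1) + 5 F_{n+2}` (the former because
`F_{n+3-i} = F_{n+1-i} + F_{n+2-i}` termwise, the latter because
`L_{n+1} + L_{n+3} = 5 F_{n+2}`), and they agree for `n = 0, 1`.
-/

/-- Lucas numbers: `L_0 = 2`, `L_1 = 1`, `L_n = F_{n-1} + F_{n+1}` for `n ≥ 1`. -/
def lucas : ℕ → ℕ
  | 0 => 2
  | n + 1 => Nat.fib n + Nat.fib (n + 2)

open Finset Nat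

lemma lucas_add_two (n : ℕ) : lucas (n + 2) = lucas n + lucas (n + 1) := by
  cases n with
  | zero => rfl
  | succ n =>
    simp only [lucas, fib_add_two]
    ring

lemma lucas_add_lucas_add_two (n : ℕ) : lucas n + lucas (n + 2) = 5 * fib (n + 1) := by
  cases n with
  | zero => rfl
  | succ n =>
    simp only [lucas, fib_add_two]
    ring

def fibConv (n : ℕ) : ℕ := ∑ i ∈ Icc 1 n, fib i * fib (n + 1 - i)

lemma fibConv_add_two (n : ℕ) :
    fibConv (n + 2) = fibConv n + fibConv (n + 1) + fib (n + 2) := by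
  have hsplit : ∀ i ∈ Icc 1 (n + 1),
      fib i * fib (n + 3 - i) = fib i * fib (n + 1 - i) + fib i * fib (n + 2 - i) := by
    intro i hi
    have hi : i ≤ n + 1 := (mem_Icc.mp hi).2
    rw [show n + 3 - i = n + 1 - i + 2 by omega, fib_add_two,
      show n + 1 - i + 1 = n + 2 - i by omega, mul_add]
  have hlow : ∑ i ∈ Icc 1 (n + 1), fib i * fib (n + 1 - i) = fibConv n := by
    rw [sum_Icc_succ_top (by omega), Nat.sub_self, fib_zero, mul_zero, add_zero]
    rfl
  unfold fibConv
  rw [sum_Icc_succ_top (by omega), sum_congr rfl hsplit, sum_add_distrib, hlow,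
    show n + 2 + 1 - (n + 2) = 1 by omega, fib_one, mul_one]
  rfl

theorem stmt3_general (n : ℕ) :
    5 * (∑ i ∈ Finset.Icc 1 n, Nat.fib i * Nat.fib (n + 1 - i)) =
      n * lucas (n + 1) + 2 * Nat.fib n := by
  change 5 * fibConv n = _
  induction n using Nat.twoStepInduction with
  | zero => rfl
  | one => rfl
  | more n ih₀ ih₁ =>
    rw [fibConv_add_two, mul_add, mul_add, ih₀, ih₁, ← lucas_add_lucas_add_two, fib_add_two,
      lucas_add_two (n + 1)]
    ring

theorem stmt3 (n : ℕ) (hn : 0 < n) :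
    5 * (∑ i ∈ Finset.Icc 1 n, Nat.fib i * Nat.fib (n + 1 - i)) =
      n * lucas (n + 1) + 2 * Nat.fib n :=
  stmt3_general n
end

section
/- Let B be the n×n matrix with entries B_{ij} = F_i F_{n-j+1} and Q an n×n matrix whose columns are eigenvectors of B (first column u_i = F_i, remaining columns in the kernel of B). Then for every k ≥ 1, B^k Q = Q D^k where D is diagonal with D_{11} = (n L_{n+1} + 2 F_n)/5 and all other diagonal entries 0. -/
open Finset Matrix

def fibConvolution (n : ℕ) : ℕ :=
  ∑ l ∈ range n, Nat.fib (l + 1) * Nat.fib (n - l)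

theorem fibConvolution_add_two (n : ℕ) :
    fibConvolution (n + 2) = fibConvolution (n + 1) + fibConvolution n + Nat.fib (n + 2) := by
  have hsplit : ∑ l ∈ range (n + 1), Nat.fib (l + 1) * Nat.fib (n + 2 - l) =
      ∑ l ∈ range (n + 1), (Nat.fib (l + 1) * Nat.fib (n + 1 - l) +
        Nat.fib (l + 1) * Nat.fib (n - l)) := by
    refine sum_congr rfl fun l hl => ?_
    have hl : l ≤ n := Nat.lt_succ_iff.mp (mem_range.mp hl)
    rw [show n + 2 - l = n - l + 2 by omega, show n + 1 - l = n - l + 1 by omega,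
      Nat.fib_add_two, mul_add, add_comm]
  rw [fibConvolution, sum_range_succ, hsplit, sum_add_distrib,
    sum_range_succ (fun l => _ * Nat.fib (n - l)), show n + 2 - (n + 1) = 1 by omega]
  simp [fibConvolution]

theorem five_mul_fibConvolution (n : ℕ) :
    5 * fibConvolution n = n * lucas (n + 1) + 2 * Nat.fib n := by
  induction n using Nat.twoStepInduction with
  | zero => decide
  | one => decide
  | more n ih₀ ih₁ =>
    rw [fibConvolution_add_two, mul_add, mul_add, ih₀, ih₁]
    simp only [lucas, Nat.fib_add_two]
    ring

theorem Matrix.mul_eq_mul_diagonal_iff {m n R : Type*} [Fintype m] [Fintype n] [DecidableEq n]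
    [CommSemiring R] (B : Matrix m m R) (Q : Matrix m n R) (d : n → R) :
    B * Q = Q * diagonal d ↔ ∀ j, B *ᵥ (fun i => Q i j) = d j • fun i => Q i j := by
  rw [← Matrix.ext_iff, forall_comm]
  simp only [mul_diagonal]
  simp only [funext_iff, mul_apply, mulVec, dotProduct, Pi.smul_apply, smul_eq_mul,
    mul_comm (d _)]

open Matrix in
theorem stmt8_general (n k : ℕ) (hn : 0 < n) (Q : Matrix (Fin n) (Fin n) ℚ)
    (hQ0 : ∀ i : Fin n, Q i ⟨0, hn⟩ = ((Nat.fib (i + 1) : ℕ) : ℚ))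
    (hQker : ∀ j : Fin n, j ≠ ⟨0, hn⟩ →
      (Matrix.of fun i j' : Fin n => ((Nat.fib (i + 1) * Nat.fib (n - j') : ℕ) : ℚ)) *ᵥ
        (fun i => Q i j) = 0) :
    (Matrix.of fun i j : Fin n =>
        ((Nat.fib (i + 1) * Nat.fib (n - j) : ℕ) : ℚ)) ^ k * Q =
      Q * (Matrix.diagonal fun j : Fin n =>
        if j = ⟨0, hn⟩ then
          (((n * lucas (n + 1) + 2 * Nat.fib n : ℕ) : ℚ)) / 5 else 0) ^ k := by
  set u : Fin n → ℚ := fun i => Nat.fib (i + 1)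
  set v : Fin n → ℚ := fun j => Nat.fib (n - j)
  have hB : (Matrix.of fun i j : Fin n => ((Nat.fib (i + 1) * Nat.fib (n - j) : ℕ) : ℚ)) =
      vecMulVec u v := by
    ext i j
    simp [u, v, vecMulVec]
  have hvu : v ⬝ᵥ u = ((n * lucas (n + 1) + 2 * Nat.fib n : ℕ) : ℚ) / 5 := by
    rw [eq_div_iff (by norm_num), ← five_mul_fibConvolution, fibConvolution, Nat.cast_mul, Nat.cast_sum,
      ← Fin.sum_univ_eq_sum_range]
    simp [u, v, dotProduct, mul_comm]
  refine (SemiconjBy.pow_right ?_ k).symm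
  refine ((mul_eq_mul_diagonal_iff _ _ _).mpr fun j => ?_).symm
  split_ifs with hj
  · subst hj
    rw [show (fun i => Q i ⟨0, hn⟩) = u from funext hQ0, hB, vecMulVec_mulVec, op_smul_eq_smul, hvu]
  · rw [hQker j hj, zero_smul]

open Matrix in
theorem stmt8 (n k : ℕ) (hn : 0 < n) (hk : 1 ≤ k) (Q : Matrix (Fin n) (Fin n) ℚ)
    (hQ0 : ∀ i : Fin n, Q i ⟨0, hn⟩ = ((Nat.fib (i + 1) : ℕ) : ℚ))
    (hQker : ∀ j : Fin n, j ≠ ⟨0, hn⟩ →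
      (Matrix.of fun i j' : Fin n => ((Nat.fib (i + 1) * Nat.fib (n - j') : ℕ) : ℚ)) *ᵥ
        (fun i => Q i j) = 0) :
    (Matrix.of fun i j : Fin n =>
        ((Nat.fib (i + 1) * Nat.fib (n - j) : ℕ) : ℚ)) ^ k * Q =
      Q * (Matrix.diagonal fun j : Fin n =>
        if j = ⟨0, hn⟩ then
          (((n * lucas (n + 1) + 2 * Nat.fib n : ℕ) : ℚ)) / 5 else 0) ^ k :=
  stmt8_general n k hn Q hQ0 hQker
end

section
/- For 2 ≤ k ≤ n+1, let T(n,k) be the n×n matrix with entries T_{ij} = F_i F_{n-j+1} if k ≤ i+j ≤ n+1 and T_{ij} = 0 otherwise. Then det(T(n,k)) = (−1)^{n(n-1)/2} ∏_{i=1}^{n} F_i². In particular, the determinant is ∏_{i=1}^n F_i² if n ≡ 0 or 1 (mod 4), and −∏_{i=1}^n F_i² if n ≡ 2 or 3 (mod 4), and is independent of k. -/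
/-!
Only the vanishing of `T(n, k)` below the antidiagonal matters: reversing the order of the
columns makes it upper triangular with diagonal entries `F_i * F_i`, while the reversal
permutation of `Fin n` has sign `(-1) ^ (n * (n - 1) / 2)`, computed by peeling off one
rotation at a time.
-/

open Equiv Finset

lemma Nat.even_triangle_iff (n : ℕ) : Even (n * (n - 1) / 2) ↔ n % 4 = 0 ∨ n % 4 = 1 := by
  induction n with
  | zero => simp
  | succ n ih => rw [Nat.triangle_succ, Nat.even_add, ih, Nat.even_iff]; omega

lemma Fin.revPerm_succ (n : ℕ) :
    (Fin.revPerm : Perm (Fin (n + 1))) =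
      Perm.decomposeFin.symm (0, Fin.revPerm) * finRotate (n + 1) := by
  ext i
  refine Fin.lastCases ?_ (fun x => ?_) i
  · simp
  · simp [Fin.coeSucc_eq_succ, Fin.rev_castSucc]

lemma Fin.sign_revPerm (n : ℕ) :
    Perm.sign (Fin.revPerm : Perm (Fin n)) = (-1) ^ (n * (n - 1) / 2) := by
  induction n with
  | zero => rfl
  | succ n ih =>
    rw [Fin.revPerm_succ, map_mul, Perm.decomposeFin.symm_sign, sign_finRotate, ih, if_pos rfl,
      one_mul, Nat.triangle_succ, pow_add, Nat.add_sub_cancel]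

lemma Matrix.det_of_eq_zero_below_antidiagonal {R : Type*} [CommRing R] {n : ℕ}
    (M : Matrix (Fin n) (Fin n) R) (hM : ∀ i j : Fin n, n ≤ (i : ℕ) + j → M i j = 0) :
    M.det = (-1) ^ (n * (n - 1) / 2) * ∏ i, M i i.rev := by
  have hupper : (M.submatrix id Fin.revPerm).IsUpperTriangular := by
    intro i j hji
    apply hM
    simp only [id, Fin.revPerm_apply, Fin.val_rev]
    have : (j : ℕ) < i := hji
    omega
  have hperm := Matrix.det_permute' Fin.revPerm M
  rw [Matrix.det_of_isUpperTriangular hupper, Fin.sign_revPerm] at hperm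
  simp only [Matrix.submatrix_apply, id, Fin.revPerm_apply] at hperm
  rw [hperm]
  push_cast
  rw [← mul_assoc, ← mul_pow, neg_one_mul, neg_neg, one_pow, one_mul]

lemma Finset.prod_Icc_one_eq_prod_fin {M : Type*} [CommMonoid M] (f : ℕ → M) (n : ℕ) :
    ∏ i ∈ Icc 1 n, f i = ∏ i : Fin n, f (i + 1) := by
  rw [Fin.prod_univ_eq_prod_range (fun i => f (i + 1)), range_eq_Ico, prod_Ico_add' f]
  rfl

theorem stmt19_general (n k : ℕ) (hkn : k ≤ n + 1) :
    (Matrix.of fun i j : Fin n =>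
        if k ≤ ((i : ℕ) + 1) + ((j : ℕ) + 1) ∧ ((i : ℕ) + 1) + ((j : ℕ) + 1) ≤ n + 1 then
          ((Nat.fib (i + 1) * Nat.fib (n - j) : ℕ) : ℤ)
        else 0).det =
      (-1 : ℤ) ^ (n * (n - 1) / 2) * ∏ i ∈ Finset.Icc 1 n, ((Nat.fib i : ℕ) : ℤ) ^ 2 ∧
    ((n % 4 = 0 ∨ n % 4 = 1) →
      (Matrix.of fun i j : Fin n =>
        if k ≤ ((i : ℕ) + 1) + ((j : ℕ) + 1) ∧ ((i : ℕ) + 1) + ((j : ℕ) + 1) ≤ n + 1 then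
          ((Nat.fib (i + 1) * Nat.fib (n - j) : ℕ) : ℤ)
        else 0).det = ∏ i ∈ Finset.Icc 1 n, ((Nat.fib i : ℕ) : ℤ) ^ 2) ∧
    ((n % 4 = 2 ∨ n % 4 = 3) →
      (Matrix.of fun i j : Fin n =>
        if k ≤ ((i : ℕ) + 1) + ((j : ℕ) + 1) ∧ ((i : ℕ) + 1) + ((j : ℕ) + 1) ≤ n + 1 then
          ((Nat.fib (i + 1) * Nat.fib (n - j) : ℕ) : ℤ)
        else 0).det = -∏ i ∈ Finset.Icc 1 n, ((Nat.fib i : ℕ) : ℤ) ^ 2) := by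
  set T : Matrix (Fin n) (Fin n) ℤ := Matrix.of fun i j : Fin n =>
    if k ≤ ((i : ℕ) + 1) + ((j : ℕ) + 1) ∧ ((i : ℕ) + 1) + ((j : ℕ) + 1) ≤ n + 1 then
      ((Nat.fib (i + 1) * Nat.fib (n - j) : ℕ) : ℤ)
    else 0
  have hzero : ∀ i j : Fin n, n ≤ (i : ℕ) + j → T i j = 0 := fun i j hij => by
    simp only [T, Matrix.of_apply]
    rw [if_neg (by omega)]
  have hdiag : ∀ i : Fin n, T i i.rev = ((Nat.fib (i + 1) : ℕ) : ℤ) ^ 2 := fun i => by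
    simp only [T, Matrix.of_apply, Fin.val_rev]
    rw [if_pos (by omega), show n - (n - (i + 1)) = i + 1 by omega]
    push_cast
    ring
  have hdet : T.det = (-1) ^ (n * (n - 1) / 2) * ∏ i ∈ Finset.Icc 1 n, ((Nat.fib i : ℕ) : ℤ) ^ 2 := by
    rw [Matrix.det_of_eq_zero_below_antidiagonal T hzero, Finset.prod_Icc_one_eq_prod_fin]
    simp only [hdiag]
  refine ⟨hdet, fun h => ?_, fun h => ?_⟩
  · rw [hdet, ((Nat.even_triangle_iff n).2 h).neg_one_pow, one_mul]
  · have hodd : Odd (n * (n - 1) / 2) := by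
      rw [← Nat.not_even_iff_odd, Nat.even_triangle_iff]
      omega
    rw [hdet, hodd.neg_one_pow, neg_one_mul]

theorem stmt19 (n k : ℕ) (hn : 2 ≤ n) (hk2 : 2 ≤ k) (hkn : k ≤ n + 1) :
    (Matrix.of fun i j : Fin n =>
        if k ≤ ((i : ℕ) + 1) + ((j : ℕ) + 1) ∧ ((i : ℕ) + 1) + ((j : ℕ) + 1) ≤ n + 1 then
          ((Nat.fib (i + 1) * Nat.fib (n - j) : ℕ) : ℤ)
        else 0).det =
      (-1 : ℤ) ^ (n * (n - 1) / 2) * ∏ i ∈ Finset.Icc 1 n, ((Nat.fib i : ℕ) : ℤ) ^ 2 ∧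
    ((n % 4 = 0 ∨ n % 4 = 1) →
      (Matrix.of fun i j : Fin n =>
        if k ≤ ((i : ℕ) + 1) + ((j : ℕ) + 1) ∧ ((i : ℕ) + 1) + ((j : ℕ) + 1) ≤ n + 1 then
          ((Nat.fib (i + 1) * Nat.fib (n - j) : ℕ) : ℤ)
        else 0).det = ∏ i ∈ Finset.Icc 1 n, ((Nat.fib i : ℕ) : ℤ) ^ 2) ∧
    ((n % 4 = 2 ∨ n % 4 = 3) →
      (Matrix.of fun i j : Fin n =>
        if k ≤ ((i : ℕ) + 1) + ((j : ℕ) + 1) ∧ ((i : ℕ) + 1) + ((j : ℕ) + 1) ≤ n + 1 then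
          ((Nat.fib (i + 1) * Nat.fib (n - j) : ℕ) : ℤ)
        else 0).det = -∏ i ∈ Finset.Icc 1 n, ((Nat.fib i : ℕ) : ℤ) ^ 2) :=
  stmt19_general n k hkn
end
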